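/- Ratio bounds for consecutive cylinders: for every n ≥ 1 and every admissible sequence (b_1, …, b_n, b_{n+1}) of positive integers (i.e. b_1 ≤ … ≤ b_n ≤ b_{n+1}), one has b_n/(b_{n+1}(b_{n+1}+2)) ≤ P(B(b_1, …, b_n, b_{n+1})) / P(B(b_1, …, b_n)) ≤ (b_n + 1)/(b_{n+1}(b_{n+1}+1)). -/

import Mathlib

open MeasureTheory Set

/-- The Engel continued fraction map, with the convention `T_E 0 = 0`. -/
noncomputable def ecfT (x : ℝ) : ℝ :=
  if x = 0 then 0 else (1 / (⌊1 / x⌋ : ℝ)) * (1 / x - (⌊1 / x⌋ : ℝ))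

/-- The `n`-th partial quotient of the ECF expansion (`n ≥ 1`). -/
noncomputable def ecfB (n : ℕ) (x : ℝ) : ℤ := ⌊1 / (ecfT^[n - 1] x)⌋

/-- The cylinder `B(b_1, …, b_n)`. -/
noncomputable def ecfCylinder (n : ℕ) (b : ℕ → ℕ) : Set ℝ :=
  {x ∈ Set.Ioc (0 : ℝ) 1 | ∀ i, 1 ≤ i → i ≤ n → ecfB i x = (b i : ℤ)}

/-!
A point `x` of `B(b_1, …, b_n)` is `Φ_n (T_E^n x)` with `T_E^n x ∈ [0, 1/b_n)`, where
`Φ_n = ψ_{b_1} ∘ ⋯ ∘ ψ_{b_n}` and `ψ_k t = 1/(k(1+t))` inverts `T_E` on `{⌊1/x⌋ = k}`; conversely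
`Φ_n` maps `(0, 1/b_n)` into the cylinder. `Φ_n` is the Möbius map of
`M_n = ∏ !![0, 1; b_i, b_i]`, hence monotone, so the cylinder has length
`|det M_n| / (d (c + b_n d))`, with `(c, d)` the bottom row of `M_n`. Since
`M_{n+1} = M_n * !![0, 1; b_{n+1}, b_{n+1}]`, consecutive lengths have ratio
`d (c + b_n d) / ((c + b_{n+1} d) (c + (b_{n+1} + 1) d))`, and `0 ≤ c ≤ d`, `b_n ≤ b_{n+1}` give
both bounds.
-/

open Matrix

noncomputable def mobius (M : Matrix (Fin 2) (Fin 2) ℝ) (t : ℝ) : ℝ :=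
  (M 0 0 * t + M 0 1) / (M 1 0 * t + M 1 1)

section Mobius

variable {M N : Matrix (Fin 2) (Fin 2) ℝ} {s : Set ℝ} {t t₁ t₂ : ℝ}

theorem mobius_mul (h : N 1 0 * t + N 1 1 ≠ 0) :
    mobius (M * N) t = mobius M (mobius N t) := by
  simp only [mobius, mul_apply, Fin.sum_univ_two]
  rw [← div_div_div_cancel_right₀ h]
  congr 1 <;> field_simp <;> ring

theorem mobius_sub_mobius (h₁ : M 1 0 * t₁ + M 1 1 ≠ 0) (h₂ : M 1 0 * t₂ + M 1 1 ≠ 0) :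
    mobius M t₂ - mobius M t₁ =
      M.det * (t₂ - t₁) / ((M 1 0 * t₁ + M 1 1) * (M 1 0 * t₂ + M 1 1)) := by
  rw [mobius, mobius, div_sub_div _ _ h₂ h₁, det_fin_two, mul_comm (M 1 0 * t₁ + M 1 1)]
  ring

theorem continuousOn_mobius (h : ∀ t ∈ s, M 1 0 * t + M 1 1 ≠ 0) :
    ContinuousOn (mobius M) s :=
  ContinuousOn.div (by fun_prop) (by fun_prop) h

theorem mapsTo_mobius_Icc (h : ∀ t ∈ Icc t₁ t₂, 0 < M 1 0 * t + M 1 1) :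
    MapsTo (mobius M) (Icc t₁ t₂) (uIcc (mobius M t₁) (mobius M t₂)) := by
  intro t ht
  have h₁ := h t₁ (left_mem_Icc.2 (ht.1.trans ht.2))
  have h₂ := h t₂ (right_mem_Icc.2 (ht.1.trans ht.2))
  have hlo := mobius_sub_mobius h₁.ne' (h t ht).ne'
  have hhi := mobius_sub_mobius (h t ht).ne' h₂.ne'
  rcases le_total 0 M.det with hdet | hdet
  · refine Icc_subset_uIcc ⟨?_, ?_⟩ <;> rw [← sub_nonneg]
    · rw [hlo]
      exact div_nonneg (mul_nonneg hdet (sub_nonneg.2 ht.1)) (mul_pos h₁ (h t ht)).le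
    · rw [hhi]
      exact div_nonneg (mul_nonneg hdet (sub_nonneg.2 ht.2)) (mul_pos (h t ht) h₂).le
  · refine Icc_subset_uIcc' ⟨?_, ?_⟩ <;> rw [← sub_nonpos]
    · rw [hhi]
      exact div_nonpos_of_nonpos_of_nonneg
        (mul_nonpos_of_nonpos_of_nonneg hdet (sub_nonneg.2 ht.2)) (mul_pos (h t ht) h₂).le
    · rw [hlo]
      exact div_nonpos_of_nonpos_of_nonneg
        (mul_nonpos_of_nonpos_of_nonneg hdet (sub_nonneg.2 ht.1)) (mul_pos h₁ (h t ht)).le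

end Mobius

theorem volume_eq_of_image_Ioo_subset_of_subset_image_Icc {f : ℝ → ℝ} {a b : ℝ} {S : Set ℝ}
    (hab : a ≤ b) (hf : ContinuousOn f (Icc a b))
    (hmaps : MapsTo f (Icc a b) (uIcc (f a) (f b)))
    (hlower : f '' Ioo a b ⊆ S) (hupper : S ⊆ f '' Icc a b) :
    volume S = ENNReal.ofReal |f b - f a| := by
  apply le_antisymm
  · calc volume S ≤ volume (uIcc (f a) (f b)) :=
          measure_mono (hupper.trans (image_subset_iff.2 hmaps))
      _ = _ := Real.volume_interval
  · calc ENNReal.ofReal |f b - f a| = volume (uIoo (f a) (f b)) := Real.volume_uIoo.symm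
      _ ≤ volume S := by
        refine measure_mono (Subset.trans ?_ hlower)
        rcases le_total (f a) (f b) with h | h
        · rw [uIoo_of_le h]; exact intermediate_value_Ioo hab hf
        · rw [uIoo_of_ge h]; exact intermediate_value_Ioo' hab hf

theorem mem_Ioc_of_one_le_floor_one_div {x : ℝ} (h : 1 ≤ ⌊1 / x⌋) : x ∈ Ioc 0 1 := by
  have h1 : (1 : ℝ) ≤ 1 / x := le_trans (by exact_mod_cast h) (Int.floor_le _)
  have hx : 0 < x := one_div_pos.1 (one_pos.trans_le h1)
  exact ⟨hx, by rwa [le_div_iff₀ hx, one_mul] at h1⟩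

def ecfStep (k : ℝ) : Matrix (Fin 2) (Fin 2) ℝ := !![0, 1; k, k]

theorem mobius_ecfStep (k t : ℝ) : mobius (ecfStep k) t = 1 / (k * (1 + t)) := by
  simp [mobius, ecfStep, mul_add, add_comm]

section OneStep

variable {k : ℕ} {x t : ℝ}

theorem ecfT_eq_of_floor_one_div (hx : x ≠ 0) (h : ⌊1 / x⌋ = k) : ecfT x = (1 / x - k) / k := by
  rw [ecfT, if_neg hx, h]
  push_cast
  ring

theorem floor_one_div_mobius_ecfStep (hk : 0 < k) (ht : t ∈ Ico 0 (1 / (k : ℝ))) :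
    ⌊1 / mobius (ecfStep k) t⌋ = k := by
  have hkt : k * t < 1 := by
    have := ht.2; rwa [lt_div_iff₀ (by positivity), mul_comm] at this
  rw [mobius_ecfStep, one_div_one_div, Int.floor_eq_iff]
  push_cast
  constructor <;> nlinarith [ht.1]

theorem ecfT_mobius_ecfStep (hk : 0 < k) (ht : t ∈ Ico 0 (1 / (k : ℝ))) :
    ecfT (mobius (ecfStep k) t) = t := by
  have hk' : (0 : ℝ) < k := by exact_mod_cast hk
  have hψ : mobius (ecfStep k) t ≠ 0 := by
    rw [mobius_ecfStep]; have := ht.1; positivity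
  rw [ecfT_eq_of_floor_one_div hψ (floor_one_div_mobius_ecfStep hk ht), mobius_ecfStep,
    one_div_one_div]
  field_simp
  ring

theorem mobius_ecfStep_ecfT (hk : 0 < k) (hx : x ≠ 0) (h : ⌊1 / x⌋ = k) :
    mobius (ecfStep k) (ecfT x) = x := by
  rw [mobius_ecfStep, ecfT_eq_of_floor_one_div hx h, mul_add, mul_one,
    mul_div_cancel₀ _ (by positivity), add_sub_cancel, one_div_one_div]

theorem ecfT_mem_Ico (hk : 0 < k) (h : ⌊1 / x⌋ = k) : ecfT x ∈ Ico 0 (1 / (k : ℝ)) := by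
  have hk' : (0 : ℝ) < k := by exact_mod_cast hk
  have hx := mem_Ioc_of_one_le_floor_one_div (x := x) (by rw [h]; exact_mod_cast hk)
  have hlo : (k : ℝ) ≤ 1 / x := by exact_mod_cast h ▸ Int.floor_le (1 / x)
  have hhi : 1 / x < k + 1 := by exact_mod_cast h ▸ Int.lt_floor_add_one (1 / x)
  rw [ecfT_eq_of_floor_one_div hx.1.ne' h]
  constructor
  · exact div_nonneg (by linarith) hk'.le
  · rw [div_lt_div_iff_of_pos_right hk']
    linarith

end OneStep

def ecfMatrix (b : ℕ → ℕ) (n : ℕ) : Matrix (Fin 2) (Fin 2) ℝ :=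
  (List.ofFn fun i : Fin n => ecfStep (b (i + 1))).prod

section EcfMatrix

variable {b : ℕ → ℕ} {n : ℕ} {t : ℝ}

theorem ecfMatrix_one (b : ℕ → ℕ) : ecfMatrix b 1 = ecfStep (b 1) := by
  simp [ecfMatrix]

theorem ecfMatrix_succ (b : ℕ → ℕ) (n : ℕ) :
    ecfMatrix b (n + 1) = ecfStep (b 1) * ecfMatrix (fun i => b (i + 1)) n := by
  simp [ecfMatrix, List.ofFn_succ]

theorem ecfMatrix_succ' (b : ℕ → ℕ) (n : ℕ) :
    ecfMatrix b (n + 1) = ecfMatrix b n * ecfStep (b (n + 1)) := by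
  simp only [ecfMatrix, List.ofFn_succ', List.prod_concat]
  rfl

theorem ecfMatrix_bottom_row (hb : ∀ i, 1 ≤ i → i ≤ n → 1 ≤ b i) :
    0 ≤ ecfMatrix b n 1 0 ∧ ecfMatrix b n 1 0 ≤ ecfMatrix b n 1 1 ∧ 0 < ecfMatrix b n 1 1 := by
  induction n with
  | zero => simp [ecfMatrix]
  | succ n ih =>
    obtain ⟨hc, -, hd⟩ := ih fun i hi hin => hb i hi (by omega)
    have hB : (0 : ℝ) < b (n + 1) := by exact_mod_cast hb (n + 1) (by omega) le_rfl
    have hdB := mul_pos hd hB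
    simp only [ecfMatrix_succ', ecfStep, mul_apply, Fin.sum_univ_two, of_apply, cons_val',
      cons_val_zero, cons_val_one, empty_val', cons_val_fin_one, mul_zero, mul_one, zero_add]
    exact ⟨hdB.le, le_add_of_nonneg_left hc, add_pos_of_nonneg_of_pos hc hdB⟩

theorem ecfMatrix_denom_pos (hb : ∀ i, 1 ≤ i → i ≤ n → 1 ≤ b i) (ht : 0 ≤ t) :
    0 < ecfMatrix b n 1 0 * t + ecfMatrix b n 1 1 := by
  obtain ⟨hc, -, hd⟩ := ecfMatrix_bottom_row hb
  positivity

theorem det_ecfMatrix_ne_zero (hb : ∀ i, 1 ≤ i → i ≤ n → 1 ≤ b i) : (ecfMatrix b n).det ≠ 0 := by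
  induction n with
  | zero => simp [ecfMatrix]
  | succ n ih =>
    have hB : (0 : ℝ) < b (n + 1) := by exact_mod_cast hb (n + 1) (by omega) le_rfl
    rw [ecfMatrix_succ', det_mul, ecfStep, det_fin_two_of]
    exact mul_ne_zero (ih fun i hi hin => hb i hi (by omega)) (by linarith)

theorem mobius_ecfMatrix_succ (hb : ∀ i, 1 ≤ i → i ≤ n + 1 → 1 ≤ b i) (ht : 0 ≤ t) :
    mobius (ecfMatrix b (n + 1)) t =
      mobius (ecfStep (b 1)) (mobius (ecfMatrix (fun i => b (i + 1)) n) t) := by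
  have hden := ecfMatrix_denom_pos (b := fun i => b (i + 1)) (n := n)
    (fun i hi hin => hb (i + 1) (by omega) (by omega)) ht
  rw [ecfMatrix_succ, mobius_mul hden.ne']

theorem mobius_ecfMatrix_pos (hb : ∀ i, 1 ≤ i → i ≤ n → 1 ≤ b i) (ht : 0 < t) :
    0 < mobius (ecfMatrix b n) t := by
  induction n generalizing b with
  | zero => simpa [ecfMatrix, mobius] using ht
  | succ n ih =>
    have hb' : ∀ i, 1 ≤ i → i ≤ n → 1 ≤ b (i + 1) :=
      fun i hi hin => hb (i + 1) (by omega) (by omega)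
    have hB : (0 : ℝ) < b 1 := by exact_mod_cast hb 1 le_rfl (by omega)
    rw [mobius_ecfMatrix_succ hb ht.le, mobius_ecfStep]
    have := ih hb'
    positivity

theorem mobius_ecfMatrix_lt (hn : 1 ≤ n) (hb : ∀ i, 1 ≤ i → i ≤ n → 1 ≤ b i) (ht : 0 < t) :
    mobius (ecfMatrix b n) t < 1 / (b 1 : ℝ) := by
  obtain ⟨n, rfl⟩ := Nat.exists_eq_add_of_le' hn
  have hB : (0 : ℝ) < b 1 := by exact_mod_cast hb 1 le_rfl (by omega)
  have hs := mobius_ecfMatrix_pos (b := fun i => b (i + 1)) (n := n)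
    (fun i hi hin => hb (i + 1) (by omega) (by omega)) ht
  rw [mobius_ecfMatrix_succ hb ht.le, mobius_ecfStep]
  exact one_div_lt_one_div_of_lt hB (by nlinarith)

end EcfMatrix

section Cylinder

variable {b : ℕ → ℕ} {n : ℕ} {x : ℝ}

theorem ecfB_succ {i : ℕ} (hi : 1 ≤ i) (x : ℝ) : ecfB (i + 1) x = ecfB i (ecfT x) := by
  obtain ⟨j, rfl⟩ := Nat.exists_eq_add_of_le' hi
  simp only [ecfB, Nat.add_sub_cancel, Function.iterate_succ_apply]

theorem mem_ecfCylinder_one (hb : 1 ≤ b 1) : x ∈ ecfCylinder 1 b ↔ ⌊1 / x⌋ = b 1 := by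
  refine ⟨fun hx => hx.2 1 le_rfl le_rfl, fun hx => ⟨?_, fun i hi hin => ?_⟩⟩
  · exact mem_Ioc_of_one_le_floor_one_div (by rw [hx]; exact_mod_cast hb)
  · obtain rfl : i = 1 := by omega
    exact hx

theorem mem_ecfCylinder_succ (hn : 1 ≤ n) (hb₁ : 1 ≤ b 1) (hb₂ : 1 ≤ b 2) :
    x ∈ ecfCylinder (n + 1) b ↔
      ⌊1 / x⌋ = b 1 ∧ ecfT x ∈ ecfCylinder n (fun i => b (i + 1)) := by
  constructor
  · rintro ⟨-, hx⟩
    have hT : ⌊1 / ecfT x⌋ = b 2 := (ecfB_succ le_rfl x).symm.trans (hx 2 (by omega) (by omega))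
    refine ⟨hx 1 le_rfl (by omega), ?_, fun i hi hin => ?_⟩
    · exact mem_Ioc_of_one_le_floor_one_div (by rw [hT]; exact_mod_cast hb₂)
    · rw [← ecfB_succ hi]
      exact hx (i + 1) (by omega) (by omega)
  · rintro ⟨hx, -, hT⟩
    refine ⟨mem_Ioc_of_one_le_floor_one_div (by rw [hx]; exact_mod_cast hb₁), fun i hi hin => ?_⟩
    obtain ⟨j, rfl⟩ := Nat.exists_eq_add_of_le' hi
    rcases Nat.eq_zero_or_pos j with rfl | hj
    · exact hx
    · rw [ecfB_succ hj]
      exact hT j hj (by omega)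

theorem ecfCylinder_subset_image (hn : 1 ≤ n) (hb : ∀ i, 1 ≤ i → i ≤ n → 1 ≤ b i) :
    ecfCylinder n b ⊆ mobius (ecfMatrix b n) '' Ico 0 (1 / (b n : ℝ)) := by
  induction n, hn using Nat.le_induction generalizing b with
  | base =>
    intro x hx
    have hb₁ := hb 1 le_rfl le_rfl
    have hfl := (mem_ecfCylinder_one hb₁).1 hx
    have hx0 := (mem_Ioc_of_one_le_floor_one_div (by rw [hfl]; exact_mod_cast hb₁)).1.ne'
    exact ⟨ecfT x, ecfT_mem_Ico hb₁ hfl, by rw [ecfMatrix_one, mobius_ecfStep_ecfT hb₁ hx0 hfl]⟩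
  | succ n hn ih =>
    intro x hx
    have hb₁ := hb 1 le_rfl (by omega)
    rw [mem_ecfCylinder_succ hn hb₁ (hb 2 (by omega) (by omega))] at hx
    obtain ⟨hfl, hT⟩ := hx
    obtain ⟨t, ht, hTt⟩ := ih (fun i hi hin => hb (i + 1) (by omega) (by omega)) hT
    have hx0 := (mem_Ioc_of_one_le_floor_one_div (by rw [hfl]; exact_mod_cast hb₁)).1.ne'
    refine ⟨t, ht, ?_⟩
    rw [mobius_ecfMatrix_succ hb ht.1, hTt, mobius_ecfStep_ecfT hb₁ hx0 hfl]

theorem image_subset_ecfCylinder (hn : 1 ≤ n) (hb : ∀ i, 1 ≤ i → i ≤ n → 1 ≤ b i)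
    (hmono : ∀ i, 1 ≤ i → i < n → b i ≤ b (i + 1)) :
    mobius (ecfMatrix b n) '' Ioo 0 (1 / (b n : ℝ)) ⊆ ecfCylinder n b := by
  induction n, hn using Nat.le_induction generalizing b with
  | base =>
    rintro _ ⟨t, ht, rfl⟩
    have hb₁ := hb 1 le_rfl le_rfl
    rw [ecfMatrix_one, mem_ecfCylinder_one hb₁]
    exact floor_one_div_mobius_ecfStep hb₁ (Ioo_subset_Ico_self ht)
  | succ n hn ih =>
    rintro _ ⟨t, ht, rfl⟩
    have hb₁ := hb 1 le_rfl (by omega)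
    have hb' : ∀ i, 1 ≤ i → i ≤ n → 1 ≤ b (i + 1) :=
      fun i hi hin => hb (i + 1) (by omega) (by omega)
    set y := mobius (ecfMatrix (fun i => b (i + 1)) n) t
    have hy : y ∈ ecfCylinder n fun i => b (i + 1) :=
      ih hb' (fun i hi hin => hmono (i + 1) (by omega) (by omega)) ⟨t, ht, rfl⟩
    -- `t > 0` keeps `y` strictly below `1 / b 2`; at `t = 0` the point can leave the cylinder,
    -- e.g. `mobius (ecfMatrix b 2) 0 = 1 / 3` for `b = (2, 2)`.
    have hy_lt : y < 1 / (b 1 : ℝ) :=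
      calc y < 1 / (b 2 : ℝ) := mobius_ecfMatrix_lt hn hb' ht.1
        _ ≤ 1 / (b 1 : ℝ) := one_div_le_one_div_of_le (by exact_mod_cast hb₁)
            (by exact_mod_cast hmono 1 le_rfl (by omega))
    have hy_mem : y ∈ Ico 0 (1 / (b 1 : ℝ)) := ⟨hy.1.1.le, hy_lt⟩
    rw [mobius_ecfMatrix_succ hb ht.1.le, mem_ecfCylinder_succ hn hb₁ (hb 2 (by omega) (by omega))]
    exact ⟨floor_one_div_mobius_ecfStep hb₁ hy_mem, by rwa [ecfT_mobius_ecfStep hb₁ hy_mem]⟩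

end Cylinder

noncomputable def ecfRatio (c d β B : ℝ) : ℝ :=
  d * (c + β * d) / ((c + B * d) * (c + (B + 1) * d))

section Ratio

variable {c d β B : ℝ}

theorem le_ecfRatio (hc : 0 ≤ c) (hcd : c ≤ d) (hd : 0 < d) (hβ : 0 ≤ β) (hβB : β ≤ B)
    (hB : 0 < B) : β / (B * (B + 2)) ≤ ecfRatio c d β B := by
  rw [ecfRatio, div_le_div_iff₀ (by positivity) (by positivity)]
  linarith [mul_nonneg (mul_nonneg hβ hc) (sub_nonneg.2 hcd),
    mul_nonneg (mul_nonneg (mul_nonneg hβ hB.le) hd.le) (sub_nonneg.2 hcd),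
    mul_nonneg (mul_nonneg (mul_nonneg hc hd.le) (sub_nonneg.2 hβB)) (by positivity : 0 ≤ B + 2)]

theorem ecfRatio_le (hc : 0 ≤ c) (hcd : c ≤ d) (hd : 0 < d) (hβ : 0 ≤ β) (hB : 0 < B) :
    ecfRatio c d β B ≤ (β + 1) / (B * (B + 1)) := by
  rw [ecfRatio, div_le_div_iff₀ (by positivity) (by positivity)]
  linarith [mul_nonneg (by positivity : 0 ≤ β + 1) (mul_nonneg hc hc),
    mul_nonneg (by positivity : 0 ≤ (β + 1) * (2 * B + 1)) (mul_nonneg hc hd.le),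
    mul_nonneg (mul_nonneg (by positivity : 0 ≤ B * (B + 1)) hd.le) (sub_nonneg.2 hcd)]

end Ratio

section Volume

variable {b : ℕ → ℕ} {n : ℕ}

theorem volume_ecfCylinder (hn : 1 ≤ n) (hb : ∀ i, 1 ≤ i → i ≤ n → 1 ≤ b i)
    (hmono : ∀ i, 1 ≤ i → i < n → b i ≤ b (i + 1)) :
    volume (ecfCylinder n b) = ENNReal.ofReal (|(ecfMatrix b n).det| /
      (ecfMatrix b n 1 1 * (ecfMatrix b n 1 0 + b n * ecfMatrix b n 1 1))) := by
  obtain ⟨hc, -, hd⟩ := ecfMatrix_bottom_row hb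
  set M := ecfMatrix b n
  have hB : (0 : ℝ) < b n := by exact_mod_cast hb n hn le_rfl
  have hcd : 0 < M 1 0 + b n * M 1 1 := add_pos_of_nonneg_of_pos hc (mul_pos hB hd)
  have hden : ∀ t ∈ Icc 0 (1 / (b n : ℝ)), 0 < M 1 0 * t + M 1 1 :=
    fun t ht => ecfMatrix_denom_pos hb ht.1
  have h₀ := hden 0 (left_mem_Icc.2 (by positivity))
  have h₁ := hden _ (right_mem_Icc.2 (by positivity))
  rw [volume_eq_of_image_Ioo_subset_of_subset_image_Icc (by positivity)
      (continuousOn_mobius fun t ht => (hden t ht).ne') (mapsTo_mobius_Icc hden)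
      (image_subset_ecfCylinder hn hb hmono)
      ((ecfCylinder_subset_image hn hb).trans (image_mono Ico_subset_Icc_self)),
    mobius_sub_mobius h₀.ne' h₁.ne', abs_div, abs_mul, abs_of_pos (mul_pos h₀ h₁),
    sub_zero, abs_of_pos (by positivity : (0 : ℝ) < 1 / b n)]
  congr 1
  field_simp
  ring

theorem volume_ecfCylinder_succ_div (hn : 1 ≤ n) (hb : ∀ i, 1 ≤ i → i ≤ n + 1 → 1 ≤ b i)
    (hmono : ∀ i, 1 ≤ i → i ≤ n → b i ≤ b (i + 1)) :
    volume (ecfCylinder (n + 1) b) / volume (ecfCylinder n b) =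
      ENNReal.ofReal (ecfRatio (ecfMatrix b n 1 0) (ecfMatrix b n 1 1) (b n) (b (n + 1))) := by
  have hb' : ∀ i, 1 ≤ i → i ≤ n → 1 ≤ b i := fun i hi hin => hb i hi (by omega)
  obtain ⟨hc, -, hd⟩ := ecfMatrix_bottom_row hb'
  have hdet := det_ecfMatrix_ne_zero hb'
  have hβ : (0 : ℝ) < b n := by exact_mod_cast hb n hn (by omega)
  have hB : (0 : ℝ) < b (n + 1) := by exact_mod_cast hb (n + 1) (by omega) le_rfl
  rw [volume_ecfCylinder (by omega) hb (fun i hi hin => hmono i hi (by omega)),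
    volume_ecfCylinder hn hb' (fun i hi hin => hmono i hi (by omega)),
    ← ENNReal.ofReal_div_of_pos (by positivity)]
  congr 1
  simp only [ecfRatio, ecfMatrix_succ' b n, det_mul, ecfStep, det_fin_two_of, mul_apply,
    Fin.sum_univ_two, of_apply, cons_val', cons_val_zero, cons_val_one, empty_val',
    cons_val_fin_one, mul_zero, mul_one, zero_add, zero_mul, zero_sub, abs_mul, abs_neg,
    abs_of_pos hB]
  field_simp
  ring

end Volume

/-- Ratio bounds for consecutive cylinders: for an admissible `(b_1, …, b_n, b_{n+1})`,
`b_n/(b_{n+1}(b_{n+1}+2)) ≤ P(B(b_1,…,b_{n+1}))/P(B(b_1,…,b_n)) ≤ (b_n+1)/(b_{n+1}(b_{n+1}+1))`. -/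
theorem ecf_cylinder_ratio (n : ℕ) (hn : 1 ≤ n) (b : ℕ → ℕ)
    (hpos : ∀ i, 1 ≤ i → i ≤ n + 1 → 1 ≤ b i)
    (hmono : ∀ i, 1 ≤ i → i ≤ n → b i ≤ b (i + 1)) :
    (b n : ENNReal) / ((b (n + 1) : ENNReal) * ((b (n + 1) : ENNReal) + 2)) ≤
        volume (ecfCylinder (n + 1) b) / volume (ecfCylinder n b) ∧
      volume (ecfCylinder (n + 1) b) / volume (ecfCylinder n b) ≤
        ((b n : ENNReal) + 1) / ((b (n + 1) : ENNReal) * ((b (n + 1) : ENNReal) + 1)) := by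
  obtain ⟨hc, hcd, hd⟩ := ecfMatrix_bottom_row (n := n) fun i hi hin => hpos i hi (by omega)
  have hβ : (0 : ℝ) ≤ b n := Nat.cast_nonneg _
  have hβB : (b n : ℝ) ≤ b (n + 1) := by exact_mod_cast hmono n hn le_rfl
  have hB : (0 : ℝ) < b (n + 1) := by exact_mod_cast hpos (n + 1) (by omega) le_rfl
  rw [volume_ecfCylinder_succ_div hn hpos hmono]
  constructor
  · calc (b n : ENNReal) / ((b (n + 1) : ENNReal) * ((b (n + 1) : ENNReal) + 2))
        = ENNReal.ofReal (b n / (b (n + 1) * (b (n + 1) + 2))) := by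
          rw [ENNReal.ofReal_div_of_pos (by positivity)]; norm_cast
      _ ≤ _ := ENNReal.ofReal_le_ofReal (le_ecfRatio hc hcd hd hβ hβB hB)
  · calc _ ≤ ENNReal.ofReal ((b n + 1) / (b (n + 1) * (b (n + 1) + 1))) :=
          ENNReal.ofReal_le_ofReal (ecfRatio_le hc hcd hd hβ hB)
      _ = ((b n : ENNReal) + 1) / ((b (n + 1) : ENNReal) * ((b (n + 1) : ENNReal) + 1)) := by
          rw [ENNReal.ofReal_div_of_pos (by positivity)]; norm_cast
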